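/- Let N be a positive integer and D > 0, and let δ ≥ 0. Let N′, N″, Q′, Q″ ∈ ℝ^{n×n} be symmetric with spectral norms at most D and with ‖N′ − N″‖₂ + ‖Q′ − Q″‖₂ ≤ 2δ, and let W₀′, W₀″ ∈ O(n) with ‖W₀′ − W₀″‖₂ ≤ δ. Define the orthogonal flows W_i′ = W_{i−1}′ exp((1/N)(W_{i−1}′ᵀ Q′ W_{i−1}′ N′ − N′ W_{i−1}′ᵀ Q′ W_{i−1}′)) and W_i″ = W_{i−1}″ exp((1/N)(W_{i−1}″ᵀ Q″ W_{i−1}″ N″ − N″ W_{i−1}″ᵀ Q″ W_{i−1}″)) for i = 1, ..., N. Then for every i ∈ {0, 1, ..., N}: ‖W_i′ − W_i″‖₂ ≤ ((1 + 1/D) e^{4D²} − 1/D) δ. -/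

import Mathlib

open Matrix

/-- The spectral (operator 2-) norm of a real matrix. -/
noncomputable def specNorm {p q : ℕ} (A : Matrix (Fin p) (Fin q) ℝ) : ℝ :=
  ‖LinearMap.toContinuousLinearMap (Matrix.toEuclideanLin A)‖

/-- The skew-symmetric generator of the ISO-ODEtoODE flow:
`A(W, Q, N) = Wᵀ Q W N - N Wᵀ Q W`. -/
def isoGen {n : ℕ} (W Q N : Matrix (Fin n) (Fin n) ℝ) : Matrix (Fin n) (Fin n) ℝ :=
  Wᵀ * Q * W * N - N * (Wᵀ * Q * W)

/-!
Both flows stay orthogonal, since `Wᵀ Q W` and `N` are symmetric and so their commutator is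
skew-symmetric. Left and right multiplication by orthogonal matrices are isometries for the spectral
norm, so one step of size `h = 1/N` enlarges the distance `e = ‖W' - W''‖` by at most
`‖exp X - exp Y‖ ≤ ‖X - Y‖ e^{max(‖X‖, ‖Y‖)}`, where the generators satisfy `‖X‖, ‖Y‖ ≤ 2hD²` and
`‖X - Y‖ ≤ h (4D² e + 4Dδ)`. With `a = 4hD² e^{2hD²}` this is the recursion
`e⁺ ≤ (1 + a) e + a δ / D`, so `e_i + δ/D ≤ (1 + a)^i (δ + δ/D)`, and `1 + a ≤ e^{4hD²}` (from
`sinh t ≥ t`) bounds `(1 + a)^i` by `e^{4D² i h} ≤ e^{4D²}`.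
-/

open NormedSpace

theorem Real.one_add_mul_exp_half_le_exp {u : ℝ} (hu : 0 ≤ u) :
    1 + u * Real.exp (u / 2) ≤ Real.exp u := by
  have hsinh : u / 2 ≤ Real.sinh (u / 2) := Real.self_le_sinh_iff.mpr (by linarith)
  rw [Real.sinh_eq] at hsinh
  have hsq : Real.exp u = Real.exp (u / 2) * Real.exp (u / 2) := by
    rw [← Real.exp_add, add_halves]
  have hinv : Real.exp (-(u / 2)) * Real.exp (u / 2) = 1 := by
    rw [← Real.exp_add, neg_add_cancel, Real.exp_zero]
  nlinarith [Real.exp_pos (u / 2)]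

theorem add_le_pow_mul_add_of_le_mul_add {e : ℕ → ℝ} {a c : ℝ} {n : ℕ} (ha : 0 ≤ 1 + a)
    (he : ∀ i < n, e (i + 1) ≤ (1 + a) * e i + a * c) :
    ∀ i ≤ n, e i + c ≤ (1 + a) ^ i * (e 0 + c) := by
  intro i hi
  induction i with
  | zero => simp
  | succ i ih =>
    calc e (i + 1) + c ≤ (1 + a) * (e i + c) := by linarith [he i hi]
      _ ≤ (1 + a) * ((1 + a) ^ i * (e 0 + c)) := by gcongr; exact ih (by omega)
      _ = (1 + a) ^ (i + 1) * (e 0 + c) := by ring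

theorem lie_mem_skewAdjoint {R : Type*} [Ring R] [StarRing R] {a b : R} (ha : IsSelfAdjoint a)
    (hb : IsSelfAdjoint b) : ⁅a, b⁆ ∈ skewAdjoint R := by
  rw [skewAdjoint.mem_iff, Ring.lie_def, star_sub, star_mul, star_mul, ha.star_eq, hb.star_eq,
    neg_sub]

section NormedRing

variable {𝔸 : Type*} [NormedRing 𝔸]

theorem norm_lie_le (a b : 𝔸) : ‖⁅a, b⁆‖ ≤ 2 * ‖a‖ * ‖b‖ := by
  rw [Ring.lie_def]
  calc ‖a * b - b * a‖ ≤ ‖a‖ * ‖b‖ + ‖b‖ * ‖a‖ :=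
        (norm_sub_le _ _).trans (add_le_add (norm_mul_le _ _) (norm_mul_le _ _))
    _ = 2 * ‖a‖ * ‖b‖ := by ring

theorem norm_lie_sub_lie_le (a₁ a₂ b₁ b₂ : 𝔸) :
    ‖⁅a₁, b₁⁆ - ⁅a₂, b₂⁆‖ ≤ 2 * (‖a₁ - a₂‖ * ‖b₁‖ + ‖a₂‖ * ‖b₁ - b₂‖) := by
  have hsplit : ⁅a₁, b₁⁆ - ⁅a₂, b₂⁆ = ⁅a₁ - a₂, b₁⁆ + ⁅a₂, b₁ - b₂⁆ := by
    simp only [Ring.lie_def]; noncomm_ring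
  calc ‖⁅a₁, b₁⁆ - ⁅a₂, b₂⁆‖ ≤ ‖⁅a₁ - a₂, b₁⁆‖ + ‖⁅a₂, b₁ - b₂⁆‖ := hsplit ▸ norm_add_le _ _
    _ ≤ 2 * ‖a₁ - a₂‖ * ‖b₁‖ + 2 * ‖a₂‖ * ‖b₁ - b₂‖ :=
        add_le_add (norm_lie_le _ _) (norm_lie_le _ _)
    _ = 2 * (‖a₁ - a₂‖ * ‖b₁‖ + ‖a₂‖ * ‖b₁ - b₂‖) := by ring

theorem norm_pow_succ_sub_pow_succ_le (x y : 𝔸) (k : ℕ) :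
    ‖x ^ (k + 1) - y ^ (k + 1)‖ ≤ (k + 1) * max ‖x‖ ‖y‖ ^ k * ‖x - y‖ := by
  set M := max ‖x‖ ‖y‖
  induction k with
  | zero => simp
  | succ k ih =>
    have hsplit : x ^ (k + 2) - y ^ (k + 2) =
        (x - y) * x ^ (k + 1) + y * (x ^ (k + 1) - y ^ (k + 1)) := by
      rw [pow_succ' x, pow_succ' y]; noncomm_ring
    have hx : ‖x ^ (k + 1)‖ ≤ M ^ (k + 1) :=
      (norm_pow_le' x k.succ_pos).trans (by gcongr; exact le_max_left _ _)
    have hy : ‖y‖ ≤ M := le_max_right _ _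
    calc ‖x ^ (k + 2) - y ^ (k + 2)‖
        ≤ ‖x - y‖ * ‖x ^ (k + 1)‖ + ‖y‖ * ‖x ^ (k + 1) - y ^ (k + 1)‖ := by
          rw [hsplit]
          exact (norm_add_le _ _).trans (add_le_add (norm_mul_le _ _) (norm_mul_le _ _))
      _ ≤ ‖x - y‖ * M ^ (k + 1) + M * ((k + 1) * M ^ k * ‖x - y‖) := by gcongr
      _ = ((k + 1 : ℕ) + 1) * M ^ (k + 1) * ‖x - y‖ := by push_cast; ring

variable [NormedAlgebra ℝ 𝔸] [CompleteSpace 𝔸]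

theorem NormedSpace.norm_exp_sub_exp_le (x y : 𝔸) :
    ‖exp x - exp y‖ ≤ ‖x - y‖ * Real.exp (max ‖x‖ ‖y‖) := by
  set M := max ‖x‖ ‖y‖
  set f : ℕ → 𝔸 := fun k => ((k + 1).factorial⁻¹ : ℝ) • (x ^ (k + 1) - y ^ (k + 1))
  have hf : HasSum f (exp x - exp y) := by
    have h := (exp_series_hasSum_exp' (𝕂 := ℝ) x).sub (exp_series_hasSum_exp' (𝕂 := ℝ) y)
    simpa [f, smul_sub, hasSum_nat_add_iff' 1] using (hasSum_nat_add_iff' 1).mpr h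
  have hg : HasSum (fun k => ‖x - y‖ * (M ^ k / k.factorial)) (‖x - y‖ * Real.exp M) := by
    rw [Real.exp_eq_exp_ℝ]; exact (expSeries_div_hasSum_exp M).mul_left _
  refine hf.norm_le_of_bounded hg fun k => ?_
  have hfac : ((k + 1).factorial : ℝ) = (k + 1) * k.factorial := by
    push_cast [Nat.factorial_succ]; ring
  calc ‖f k‖ = ((k + 1).factorial⁻¹ : ℝ) * ‖x ^ (k + 1) - y ^ (k + 1)‖ := by
        simp [f, norm_smul]
    _ ≤ ((k + 1).factorial⁻¹ : ℝ) * ((k + 1) * M ^ k * ‖x - y‖) := by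
        gcongr; exact norm_pow_succ_sub_pow_succ_le x y k
    _ = ‖x - y‖ * (M ^ k / k.factorial) := by
        rw [hfac]; field_simp

/-- Mathlib's `exp_mem_unitary_of_mem_skewAdjoint` asks for `NormedAlgebra ℚ 𝔸`, which real
matrices with the L2 operator norm do not carry. -/
theorem NormedSpace.exp_mem_unitary_of_mem_skewAdjoint_real [StarRing 𝔸] [ContinuousStar 𝔸]
    {x : 𝔸} (hx : x ∈ skewAdjoint 𝔸) : exp x ∈ unitary 𝔸 := by
  have hexp_add : ∀ y z : 𝔸, Commute y z → exp (y + z) = exp y * exp z := fun y z hyz =>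
    exp_add_of_commute_of_mem_ball (𝕂 := ℝ) hyz
      ((expSeries_radius_eq_top ℝ 𝔸).symm ▸ edist_lt_top _ _)
      ((expSeries_radius_eq_top ℝ 𝔸).symm ▸ edist_lt_top _ _)
  rw [Unitary.mem_iff, star_exp, skewAdjoint.mem_iff.mp hx,
    ← hexp_add _ _ (Commute.refl x).neg_left, ← hexp_add _ _ (Commute.refl x).neg_right,
    neg_add_cancel, add_neg_cancel, exp_zero]
  exact ⟨rfl, rfl⟩

end NormedRing

section CStarRing

variable {𝔸 : Type*} [NormedRing 𝔸] [StarRing 𝔸] [CStarRing 𝔸]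

theorem norm_star_mul_mul_of_mem_unitary {U : 𝔸} (hU : U ∈ unitary 𝔸) (P : 𝔸) :
    ‖star U * P * U‖ = ‖P‖ := by
  rw [CStarRing.norm_mul_mem_unitary _ hU,
    CStarRing.norm_mem_unitary_mul _ (Unitary.star_mem hU)]

theorem norm_star_mul_mul_sub_star_mul_mul_le {U V : 𝔸} (hU : U ∈ unitary 𝔸)
    (hV : V ∈ unitary 𝔸) (P Q : 𝔸) :
    ‖star U * P * U - star V * Q * V‖ ≤ 2 * ‖P‖ * ‖U - V‖ + ‖P - Q‖ := by
  have hsplit : star U * P * U - star V * Q * V =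
      star (U - V) * P * U + star V * (P * (U - V)) + star V * (P - Q) * V := by
    rw [star_sub]; noncomm_ring
  calc ‖star U * P * U - star V * Q * V‖
      ≤ ‖star (U - V) * P * U‖ + ‖star V * (P * (U - V))‖ + ‖star V * (P - Q) * V‖ := by
        rw [hsplit]; exact norm_add₃_le
    _ = ‖star (U - V) * P‖ + ‖P * (U - V)‖ + ‖P - Q‖ := by
        rw [CStarRing.norm_mul_mem_unitary _ hU,
          CStarRing.norm_mem_unitary_mul _ (Unitary.star_mem hV),
          norm_star_mul_mul_of_mem_unitary hV]
    _ ≤ ‖U - V‖ * ‖P‖ + ‖P‖ * ‖U - V‖ + ‖P - Q‖ := by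
        gcongr
        · exact (norm_mul_le _ _).trans_eq (by rw [norm_star])
        · exact norm_mul_le _ _
    _ = 2 * ‖P‖ * ‖U - V‖ + ‖P - Q‖ := by ring

theorem norm_mul_sub_mul_le_of_mem_unitary {U b : 𝔸} (hU : U ∈ unitary 𝔸)
    (hb : b ∈ unitary 𝔸) (a V : 𝔸) : ‖U * a - V * b‖ ≤ ‖U - V‖ + ‖a - b‖ := by
  have hsplit : U * a - V * b = U * (a - b) + (U - V) * b := by noncomm_ring
  calc ‖U * a - V * b‖ ≤ ‖U * (a - b)‖ + ‖(U - V) * b‖ := hsplit ▸ norm_add_le _ _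
    _ = ‖U - V‖ + ‖a - b‖ := by
        rw [CStarRing.norm_mem_unitary_mul _ hU, CStarRing.norm_mul_mem_unitary _ hb, add_comm]

end CStarRing

section IsoStep

variable {𝔸 : Type*} [NormedRing 𝔸] [StarRing 𝔸] [NormedAlgebra ℝ 𝔸]

/-- For real matrices `⁅star W * Q * W, N⁆ = isoGen W Q N`, so this is one step of the
ISO-ODEtoODE flow with step size `h`. -/
noncomputable def isoStep (h : ℝ) (Q N W : 𝔸) : 𝔸 :=
  W * exp (h • ⁅star W * Q * W, N⁆)

theorem isoStep_mem_unitary [CompleteSpace 𝔸] [ContinuousStar 𝔸] [StarModule ℝ 𝔸] {Q N W : 𝔸}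
    (h : ℝ) (hQ : IsSelfAdjoint Q) (hN : IsSelfAdjoint N) (hW : W ∈ unitary 𝔸) :
    isoStep h Q N W ∈ unitary 𝔸 :=
  Submonoid.mul_mem _ hW <| exp_mem_unitary_of_mem_skewAdjoint_real <|
    skewAdjoint.smul_mem h (lie_mem_skewAdjoint (hQ.conjugate' W) hN)

theorem isoStep_iterate_mem_unitary [CompleteSpace 𝔸] [ContinuousStar 𝔸] [StarModule ℝ 𝔸]
    {h : ℝ} {Q N : 𝔸} (hQ : IsSelfAdjoint Q) (hN : IsSelfAdjoint N) {n : ℕ} {W : ℕ → 𝔸}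
    (hW₀ : W 0 ∈ unitary 𝔸) (hW : ∀ i < n, W (i + 1) = isoStep h Q N (W i)) :
    ∀ i ≤ n, W i ∈ unitary 𝔸 := by
  intro i hi
  induction i with
  | zero => exact hW₀
  | succ i ih => rw [hW i hi]; exact isoStep_mem_unitary h hQ hN (ih (by omega))

variable [CStarRing 𝔸]

theorem norm_smul_lie_star_mul_mul_le {h D : ℝ} (hh : 0 ≤ h) {Q N W : 𝔸} (hW : W ∈ unitary 𝔸)
    (hQ : ‖Q‖ ≤ D) (hN : ‖N‖ ≤ D) : ‖h • ⁅star W * Q * W, N⁆‖ ≤ 2 * h * D ^ 2 := by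
  have hD : 0 ≤ D := (norm_nonneg _).trans hQ
  rw [norm_smul, Real.norm_of_nonneg hh]
  calc h * ‖⁅star W * Q * W, N⁆‖ ≤ h * (2 * ‖Q‖ * ‖N‖) := by
        gcongr
        exact (norm_lie_le _ _).trans_eq (by rw [norm_star_mul_mul_of_mem_unitary hW])
    _ ≤ h * (2 * D * D) := by gcongr
    _ = 2 * h * D ^ 2 := by ring

variable [CompleteSpace 𝔸] [StarModule ℝ 𝔸]

theorem norm_isoStep_sub_isoStep_le {h D : ℝ} (hh : 0 ≤ h) {Q₁ Q₂ N₁ N₂ U V : 𝔸}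
    (hQ₂ : IsSelfAdjoint Q₂) (hN₂ : IsSelfAdjoint N₂) (hU : U ∈ unitary 𝔸) (hV : V ∈ unitary 𝔸)
    (hQ₁D : ‖Q₁‖ ≤ D) (hQ₂D : ‖Q₂‖ ≤ D) (hN₁D : ‖N₁‖ ≤ D) (hN₂D : ‖N₂‖ ≤ D) :
    ‖isoStep h Q₁ N₁ U - isoStep h Q₂ N₂ V‖ ≤ ‖U - V‖ +
      h * Real.exp (2 * h * D ^ 2) * (4 * D ^ 2 * ‖U - V‖ + 2 * D * (‖Q₁ - Q₂‖ + ‖N₁ - N₂‖)) := by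
  have hD : 0 ≤ D := (norm_nonneg _).trans hQ₁D
  set A₁ := h • ⁅star U * Q₁ * U, N₁⁆
  set A₂ := h • ⁅star V * Q₂ * V, N₂⁆
  have hA : ‖A₁ - A₂‖ ≤ h * (4 * D ^ 2 * ‖U - V‖ + 2 * D * (‖Q₁ - Q₂‖ + ‖N₁ - N₂‖)) := by
    rw [← smul_sub, norm_smul, Real.norm_of_nonneg hh]
    gcongr
    calc ‖⁅star U * Q₁ * U, N₁⁆ - ⁅star V * Q₂ * V, N₂⁆‖
        ≤ 2 * (‖star U * Q₁ * U - star V * Q₂ * V‖ * ‖N₁‖ + ‖star V * Q₂ * V‖ * ‖N₁ - N₂‖) :=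
          norm_lie_sub_lie_le _ _ _ _
      _ ≤ 2 * ((2 * ‖Q₁‖ * ‖U - V‖ + ‖Q₁ - Q₂‖) * D + D * ‖N₁ - N₂‖) := by
          rw [norm_star_mul_mul_of_mem_unitary hV]
          gcongr
          exact norm_star_mul_mul_sub_star_mul_mul_le hU hV _ _
      _ ≤ 2 * ((2 * D * ‖U - V‖ + ‖Q₁ - Q₂‖) * D + D * ‖N₁ - N₂‖) := by gcongr
      _ = 4 * D ^ 2 * ‖U - V‖ + 2 * D * (‖Q₁ - Q₂‖ + ‖N₁ - N₂‖) := by ring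
  have hexp : Real.exp (max ‖A₁‖ ‖A₂‖) ≤ Real.exp (2 * h * D ^ 2) := by
    gcongr
    exact max_le (norm_smul_lie_star_mul_mul_le hh hU hQ₁D hN₁D)
      (norm_smul_lie_star_mul_mul_le hh hV hQ₂D hN₂D)
  calc ‖U * exp A₁ - V * exp A₂‖ ≤ ‖U - V‖ + ‖exp A₁ - exp A₂‖ :=
        norm_mul_sub_mul_le_of_mem_unitary hU (exp_mem_unitary_of_mem_skewAdjoint_real
          (skewAdjoint.smul_mem h (lie_mem_skewAdjoint (hQ₂.conjugate' V) hN₂))) _ _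
    _ ≤ ‖U - V‖ + ‖A₁ - A₂‖ * Real.exp (max ‖A₁‖ ‖A₂‖) := by
        gcongr; exact norm_exp_sub_exp_le _ _
    _ ≤ _ := by
        rw [mul_comm _ (Real.exp _), mul_comm h, mul_assoc]
        gcongr

theorem norm_isoStep_iterate_sub_le {h D δ : ℝ} (hh : 0 ≤ h) (hD : 0 < D) {Q₁ Q₂ N₁ N₂ : 𝔸}
    (hQ₁ : IsSelfAdjoint Q₁) (hQ₂ : IsSelfAdjoint Q₂) (hN₁ : IsSelfAdjoint N₁)
    (hN₂ : IsSelfAdjoint N₂) (hQ₁D : ‖Q₁‖ ≤ D) (hQ₂D : ‖Q₂‖ ≤ D) (hN₁D : ‖N₁‖ ≤ D)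
    (hN₂D : ‖N₂‖ ≤ D) (hQN : ‖Q₁ - Q₂‖ + ‖N₁ - N₂‖ ≤ 2 * δ) {n : ℕ} {W₁ W₂ : ℕ → 𝔸}
    (hW₁₀ : W₁ 0 ∈ unitary 𝔸) (hW₂₀ : W₂ 0 ∈ unitary 𝔸) (hW₀ : ‖W₁ 0 - W₂ 0‖ ≤ δ)
    (hW₁ : ∀ i < n, W₁ (i + 1) = isoStep h Q₁ N₁ (W₁ i))
    (hW₂ : ∀ i < n, W₂ (i + 1) = isoStep h Q₂ N₂ (W₂ i)) :
    ∀ i ≤ n, ‖W₁ i - W₂ i‖ ≤ ((1 + 1 / D) * Real.exp (4 * D ^ 2 * (h * i)) - 1 / D) * δ := by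
  intro i hi
  have hδ : 0 ≤ δ := (norm_nonneg _).trans hW₀
  set a := h * Real.exp (2 * h * D ^ 2) * (4 * D ^ 2)
  have ha : 0 ≤ a := by positivity
  have hstep : ∀ i < n, ‖W₁ (i + 1) - W₂ (i + 1)‖ ≤ (1 + a) * ‖W₁ i - W₂ i‖ + a * (δ / D) := by
    intro i hi
    rw [hW₁ i hi, hW₂ i hi]
    calc _ ≤ ‖W₁ i - W₂ i‖ + h * Real.exp (2 * h * D ^ 2) *
            (4 * D ^ 2 * ‖W₁ i - W₂ i‖ + 2 * D * (‖Q₁ - Q₂‖ + ‖N₁ - N₂‖)) :=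
          norm_isoStep_sub_isoStep_le hh hQ₂ hN₂
            (isoStep_iterate_mem_unitary hQ₁ hN₁ hW₁₀ hW₁ i hi.le)
            (isoStep_iterate_mem_unitary hQ₂ hN₂ hW₂₀ hW₂ i hi.le) hQ₁D hQ₂D hN₁D hN₂D
      _ ≤ ‖W₁ i - W₂ i‖ + h * Real.exp (2 * h * D ^ 2) *
            (4 * D ^ 2 * ‖W₁ i - W₂ i‖ + 2 * D * (2 * δ)) := by gcongr
      _ = (1 + a) * ‖W₁ i - W₂ i‖ + a * (δ / D) := by simp only [a]; field_simp; ring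
  have hgrowth : (1 + a) ^ i ≤ Real.exp (4 * D ^ 2 * (h * i)) := by
    have h1a : 1 + a ≤ Real.exp (4 * h * D ^ 2) :=
      calc 1 + a = 1 + 4 * h * D ^ 2 * Real.exp (4 * h * D ^ 2 / 2) := by simp only [a]; ring_nf
        _ ≤ Real.exp (4 * h * D ^ 2) := Real.one_add_mul_exp_half_le_exp (by positivity)
    calc (1 + a) ^ i ≤ Real.exp (4 * h * D ^ 2) ^ i := by gcongr
      _ = Real.exp (4 * D ^ 2 * (h * i)) := by rw [← Real.exp_nat_mul]; ring_nf
  calc ‖W₁ i - W₂ i‖ ≤ (1 + a) ^ i * (‖W₁ 0 - W₂ 0‖ + δ / D) - δ / D := by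
        linarith [add_le_pow_mul_add_of_le_mul_add (e := fun i => ‖W₁ i - W₂ i‖) (by linarith)
          hstep i hi]
    _ ≤ Real.exp (4 * D ^ 2 * (h * i)) * (δ + δ / D) - δ / D := by gcongr
    _ = ((1 + 1 / D) * Real.exp (4 * D ^ 2 * (h * i)) - 1 / D) * δ := by ring

end IsoStep

open scoped Matrix.Norms.L2Operator

theorem stmt7_general (n N : ℕ) (D δ : ℝ) (hD : 0 < D)
    (Nm' Nm'' Q' Q'' : Matrix (Fin n) (Fin n) ℝ)
    (hNs' : Nm'ᵀ = Nm') (hNs'' : Nm''ᵀ = Nm'') (hQs' : Q'ᵀ = Q') (hQs'' : Q''ᵀ = Q'')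
    (hN' : specNorm Nm' ≤ D) (hN'' : specNorm Nm'' ≤ D)
    (hQ' : specNorm Q' ≤ D) (hQ'' : specNorm Q'' ≤ D)
    (hNQdiff : specNorm (Nm' - Nm'') + specNorm (Q' - Q'') ≤ 2 * δ)
    (W' W'' : ℕ → Matrix (Fin n) (Fin n) ℝ)
    (hW0' : (W' 0)ᵀ * W' 0 = 1) (hW0'' : (W'' 0)ᵀ * W'' 0 = 1)
    (hW0diff : specNorm (W' 0 - W'' 0) ≤ δ)
    (hrec' : ∀ i : ℕ, i < N →
      W' (i + 1) = W' i * NormedSpace.exp ((N : ℝ)⁻¹ • isoGen (W' i) Q' Nm'))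
    (hrec'' : ∀ i : ℕ, i < N →
      W'' (i + 1) = W'' i * NormedSpace.exp ((N : ℝ)⁻¹ • isoGen (W'' i) Q'' Nm'')) :
    ∀ i : ℕ, i ≤ N →
      specNorm (W' i - W'' i) ≤ ((1 + 1 / D) * Real.exp (4 * D ^ 2) - 1 / D) * δ := by
  have hsymm : ∀ A : Matrix (Fin n) (Fin n) ℝ, Aᵀ = A → IsSelfAdjoint A := fun A hA =>
    (conjTranspose_eq_transpose_of_trivial A).trans hA
  have horth : ∀ W : Matrix (Fin n) (Fin n) ℝ, Wᵀ * W = 1 → W ∈ unitary _ := fun W hW =>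
    mem_unitaryGroup_iff'.mpr <| by
      rwa [star_eq_conjTranspose, conjTranspose_eq_transpose_of_trivial]
  have hstep : ∀ (W : ℕ → Matrix (Fin n) (Fin n) ℝ) (Q Nm : Matrix (Fin n) (Fin n) ℝ),
      (∀ i < N, W (i + 1) = W i * NormedSpace.exp ((N : ℝ)⁻¹ • isoGen (W i) Q Nm)) →
      ∀ i < N, W (i + 1) = isoStep (N : ℝ)⁻¹ Q Nm (W i) := fun W Q Nm hW i hi => by
    rw [hW i hi, isoStep, isoGen, Ring.lie_def, star_eq_conjTranspose,
      conjTranspose_eq_transpose_of_trivial]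
  intro i hi
  have hδ : 0 ≤ δ := (norm_nonneg _).trans hW0diff
  have htime : (N : ℝ)⁻¹ * i ≤ 1 := inv_mul_le_one_of_le₀ (by exact_mod_cast hi) (by positivity)
  calc specNorm (W' i - W'' i)
      ≤ ((1 + 1 / D) * Real.exp (4 * D ^ 2 * ((N : ℝ)⁻¹ * i)) - 1 / D) * δ :=
        norm_isoStep_iterate_sub_le (by positivity) hD (hsymm _ hQs') (hsymm _ hQs'')
          (hsymm _ hNs') (hsymm _ hNs'') hQ' hQ'' hN' hN'' ((add_comm _ _).trans_le hNQdiff)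
          (horth _ hW0') (horth _ hW0'') hW0diff (hstep W' Q' Nm' hrec')
          (hstep W'' Q'' Nm'' hrec'') i hi
    _ ≤ ((1 + 1 / D) * Real.exp (4 * D ^ 2) - 1 / D) * δ := by
        gcongr ((1 + 1 / D) * Real.exp ?_ - 1 / D) * δ
        exact mul_le_of_le_one_right (by positivity) htime

/-- Stability of the ISO-ODEtoODE orthogonal parameter flow:
`‖W_i' - W_i''‖₂ ≤ ((1 + 1/D) e^{4D²} - 1/D) δ` for all `0 ≤ i ≤ N`. -/
theorem stmt7 (n N : ℕ) (hN : 0 < N) (D δ : ℝ) (hD : 0 < D) (hδ : 0 ≤ δ)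
    (Nm' Nm'' Q' Q'' : Matrix (Fin n) (Fin n) ℝ)
    (hNs' : Nm'ᵀ = Nm') (hNs'' : Nm''ᵀ = Nm'') (hQs' : Q'ᵀ = Q') (hQs'' : Q''ᵀ = Q'')
    (hN' : specNorm Nm' ≤ D) (hN'' : specNorm Nm'' ≤ D)
    (hQ' : specNorm Q' ≤ D) (hQ'' : specNorm Q'' ≤ D)
    (hNQdiff : specNorm (Nm' - Nm'') + specNorm (Q' - Q'') ≤ 2 * δ)
    (W' W'' : ℕ → Matrix (Fin n) (Fin n) ℝ)
    (hW0' : (W' 0)ᵀ * W' 0 = 1) (hW0'' : (W'' 0)ᵀ * W'' 0 = 1)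
    (hW0diff : specNorm (W' 0 - W'' 0) ≤ δ)
    (hrec' : ∀ i : ℕ, i < N →
      W' (i + 1) = W' i * NormedSpace.exp ((N : ℝ)⁻¹ • isoGen (W' i) Q' Nm'))
    (hrec'' : ∀ i : ℕ, i < N →
      W'' (i + 1) = W'' i * NormedSpace.exp ((N : ℝ)⁻¹ • isoGen (W'' i) Q'' Nm'')) :
    ∀ i : ℕ, i ≤ N →
      specNorm (W' i - W'' i) ≤ ((1 + 1 / D) * Real.exp (4 * D ^ 2) - 1 / D) * δ :=
  stmt7_general n N D δ hD Nm' Nm'' Q' Q'' hNs' hNs'' hQs' hQs'' hN' hN'' hQ' hQ'' hNQdiff W' W''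
    hW0' hW0'' hW0diff hrec' hrec''
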